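/- arXiv:1506.04330 — 8 statements merged into one kernel-verified Lean document; each statement's English description precedes it below -/
import Mathlib

section
/- Let μ = 2ℓ+2 with ℓ ≥ 1, let κ ≥ log₂ μ be a real capacity, and let λ be a real with λ > 1 - 1/κ. Then μ^λ - 1 > ℓ. -/
theorem stmt_2 (ℓ μ κ lam : ℝ) (hℓ : 1 ≤ ℓ) (hμ : μ = 2 * ℓ + 2)
    (hκ : Real.logb 2 μ ≤ κ) (hlam : 1 - 1 / κ < lam) :
    ℓ < μ ^ lam - 1 := by
  have hμ4 : (4:ℝ) ≤ μ := by nlinarith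
  have hμ1 : (1:ℝ) < μ := by linarith
  have hμ0 : (0:ℝ) < μ := by linarith
  have hlog2 : (0:ℝ) < Real.log 2 := Real.log_pos (by norm_num)
  have hlogμ : (0:ℝ) < Real.log μ := Real.log_pos hμ1
  have hκ0 : (0:ℝ) < κ := by
    have : 0 < Real.logb 2 μ := Real.logb_pos (by norm_num) hμ1
    linarith
  -- μ^(1/κ) ≤ 2
  have hlogle : Real.log μ ≤ κ * Real.log 2 := by
    have := hκ
    rw [Real.logb, div_le_iff₀ hlog2] at this
    linarith
  have hkey : μ ^ (1/κ : ℝ) ≤ 2 := by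
    have hlt : Real.log (μ ^ (1/κ : ℝ)) ≤ Real.log 2 := by
      rw [Real.log_rpow hμ0]
      rw [div_mul_eq_mul_div, div_le_iff₀ hκ0]
      linarith
    exact (Real.log_le_log_iff (Real.rpow_pos_of_pos hμ0 _) (by norm_num)).mp hlt
  have hstep : μ / 2 ≤ μ ^ (1 - 1/κ : ℝ) := by
    have h1 : μ ^ (1 - 1/κ : ℝ) = μ / μ ^ (1/κ : ℝ) := by
      rw [Real.rpow_sub hμ0, Real.rpow_one]
    rw [h1]
    apply div_le_div_of_nonneg_left (by linarith) (Real.rpow_pos_of_pos hμ0 _) hkey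
  have hmono : μ ^ (1 - 1/κ : ℝ) < μ ^ lam :=
    Real.rpow_lt_rpow_left_iff hμ1 |>.mpr hlam
  have : ℓ + 1 < μ ^ lam := by
    have : μ / 2 = ℓ + 1 := by linarith
    linarith
  linarith
end

section
/- Let μ = 2ℓ+2 with ℓ ≥ 1, and let κ ≥ log₂ μ. Then for any real λ ≥ 0, κ·(μ^(λ + 1/κ) - μ^λ) ≤ (log₂ μ)·(κ·(μ^λ - 1)/κ + 1), i.e., the cost increase of a node when its load increases by 1/κ is at most (log₂ μ)·(w/κ + 1) where w = κ(μ^λ - 1). -/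
/-! Writing `L = log₂ μ`, we have `μ ^ (1/κ) = 2 ^ (L/κ)` with `0 ≤ L/κ ≤ 1`, and Bernoulli's
inequality `2 ^ x ≤ 1 + x` on `[0, 1]` gives `κ (μ ^ (1/κ) - 1) ≤ L`. The cost increment
`κ (μ ^ (λ + 1/κ) - μ ^ λ)` is `μ ^ λ` times this, while `w/κ + 1 = μ ^ λ`. -/

open Real

lemma two_rpow_le_one_add {x : ℝ} (h0 : 0 ≤ x) (h1 : x ≤ 1) : (2 : ℝ) ^ x ≤ 1 + x := by
  simpa [one_add_one_eq_two] using rpow_one_add_le_one_add_mul_self (s := 1) (by norm_num) h0 h1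

lemma mul_rpow_one_div_sub_one_le_logb {μ κ : ℝ} (hμ : 1 < μ) (hκ : logb 2 μ ≤ κ) :
    κ * (μ ^ (1 / κ) - 1) ≤ logb 2 μ := by
  have hL : 0 < logb 2 μ := logb_pos (by norm_num) hμ
  have hκ0 : 0 < κ := hL.trans_le hκ
  have hpow : μ ^ (1 / κ) = 2 ^ (logb 2 μ / κ) := by
    rw [div_eq_mul_one_div (logb 2 μ), rpow_mul (by norm_num),
      rpow_logb (by norm_num) (by norm_num) (by linarith)]
  have hbern := two_rpow_le_one_add (div_nonneg hL.le hκ0.le) ((div_le_one hκ0).2 hκ)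
  calc κ * (μ ^ (1 / κ) - 1) ≤ κ * (logb 2 μ / κ) := by
        rw [hpow]; gcongr; linarith
    _ = logb 2 μ := mul_div_cancel₀ _ hκ0.ne'

lemma mul_rpow_add_one_div_sub_rpow_le {μ κ : ℝ} (hμ : 1 < μ) (hκ : logb 2 μ ≤ κ) (lam : ℝ) :
    κ * (μ ^ (lam + 1 / κ) - μ ^ lam) ≤ logb 2 μ * μ ^ lam := by
  have hsplit : κ * (μ ^ (lam + 1 / κ) - μ ^ lam) = μ ^ lam * (κ * (μ ^ (1 / κ) - 1)) := by
    rw [rpow_add (by linarith)]; ring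
  rw [hsplit, mul_comm (logb 2 μ)]
  exact mul_le_mul_of_nonneg_left (mul_rpow_one_div_sub_one_le_logb hμ hκ)
    (rpow_nonneg (by linarith) _)

theorem stmt_3_general (ℓ μ κ lam : ℝ) (hℓ : 1 ≤ ℓ) (hμ : μ = 2 * ℓ + 2)
    (hκ : Real.logb 2 μ ≤ κ) :
    κ * (μ ^ (lam + 1 / κ) - μ ^ lam) ≤
      Real.logb 2 μ * (κ * (μ ^ lam - 1) / κ + 1) := by
  have hμ1 : 1 < μ := by linarith
  have hκ0 : κ ≠ 0 := ((logb_pos (by norm_num) hμ1).trans_le hκ).ne'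
  rw [mul_div_cancel_left₀ _ hκ0, sub_add_cancel]
  exact mul_rpow_add_one_div_sub_rpow_le hμ1 hκ lam

theorem stmt_3 (ℓ μ κ lam : ℝ) (hℓ : 1 ≤ ℓ) (hμ : μ = 2 * ℓ + 2)
    (hκ : Real.logb 2 μ ≤ κ) (hlam : 0 ≤ lam) :
    κ * (μ ^ (lam + 1 / κ) - μ ^ lam) ≤
      Real.logb 2 μ * (κ * (μ ^ lam - 1) / κ + 1) :=
  stmt_3_general ℓ μ κ lam hℓ hμ hκ
end

section
/- Let ℓ ≥ 1, μ = 2ℓ+2, and suppose a chain c consists of exactly ℓ nodes, each node v having capacity κ(v) ≥ log₂ μ and cost w_v = κ(v)(μ^{λ_v} - 1) with λ_v ≥ 0, satisfying the admission condition Σ_{v∈c} w_v/κ(v) ≤ ℓ. Then the total cost increase when each node v in c increases its load by 1/κ(v) satisfies Σ_{v∈c} κ(v)(μ^{λ_v + 1/κ(v)} - μ^{λ_v}) ≤ 2ℓ·log₂ μ. -/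
/-
Each node's cost increase factors as `μ ^ λ_v * κ_v (μ ^ (1 / κ_v) - 1)`. Writing
`μ ^ (1 / κ_v) = 2 ^ t` with `t = log₂ μ / κ_v ∈ [0, 1]`, concavity gives `2 ^ t ≤ 1 + t`, so the
second factor is at most `log₂ μ`. The admission condition says `∑ (μ ^ λ_v - 1) ≤ ℓ`, i.e.
`∑ μ ^ λ_v ≤ 2ℓ` over the `ℓ` nodes of the chain.
-/

open Real Finset

lemma mul_rpow_inv_sub_one_le_logb {μ κ : ℝ} (hμ : 1 ≤ μ) (hκ : 0 < κ) (hLκ : logb 2 μ ≤ κ) :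
    κ * (μ ^ (1 / κ) - 1) ≤ logb 2 μ := by
  have ht0 : 0 ≤ logb 2 μ / κ := div_nonneg (logb_nonneg one_lt_two hμ) hκ.le
  have ht1 : logb 2 μ / κ ≤ 1 := (div_le_one hκ).2 hLκ
  have hpow : μ ^ (1 / κ) = (1 + 1 : ℝ) ^ (logb 2 μ / κ) := by
    rw [one_add_one_eq_two, div_eq_mul_one_div (logb 2 μ), rpow_mul zero_le_two,
      rpow_logb two_pos (by norm_num) (by linarith)]
  have hbound := rpow_one_add_le_one_add_mul_self (s := 1) (by norm_num) ht0 ht1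
  rw [← hpow, mul_one] at hbound
  calc κ * (μ ^ (1 / κ) - 1) ≤ κ * (logb 2 μ / κ) := by gcongr; linarith
    _ = logb 2 μ := mul_div_cancel₀ _ hκ.ne'

lemma mul_rpow_add_inv_sub_rpow_le {μ κ lam : ℝ} (hμ : 1 ≤ μ) (hκ : 0 < κ)
    (hLκ : logb 2 μ ≤ κ) :
    κ * (μ ^ (lam + 1 / κ) - μ ^ lam) ≤ μ ^ lam * logb 2 μ := by
  have hμ0 : 0 < μ := by linarith
  calc κ * (μ ^ (lam + 1 / κ) - μ ^ lam) = μ ^ lam * (κ * (μ ^ (1 / κ) - 1)) := by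
        rw [rpow_add hμ0]; ring
    _ ≤ μ ^ lam * logb 2 μ := by
        gcongr
        exact mul_rpow_inv_sub_one_le_logb hμ hκ hLκ

theorem stmt_4_general {V : Type*} (ℓ : ℕ) (μ : ℝ)
    (hμ : μ = 2 * ℓ + 2) (c : Finset V) (hc : c.card = ℓ)
    (κ lam : V → ℝ)
    (hκ : ∀ v ∈ c, Real.logb 2 μ ≤ κ v)
    (hadmit : ∑ v ∈ c, (κ v * (μ ^ lam v - 1)) / κ v ≤ (ℓ : ℝ)) :
    ∑ v ∈ c, κ v * (μ ^ (lam v + 1 / κ v) - μ ^ lam v) ≤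
      2 * ℓ * Real.logb 2 μ := by
  have hμ2 : 2 ≤ μ := by rw [hμ]; linarith [Nat.cast_nonneg (α := ℝ) ℓ]
  have hL : 0 < logb 2 μ := logb_pos one_lt_two (by linarith)
  have hκpos : ∀ v ∈ c, 0 < κ v := fun v hv => hL.trans_le (hκ v hv)
  have hsum : ∑ v ∈ c, μ ^ lam v ≤ 2 * ℓ := by
    rw [sum_congr rfl fun v hv => mul_div_cancel_left₀ _ (hκpos v hv).ne', sum_sub_distrib,
      sum_const, hc, nsmul_one] at hadmit
    linarith
  calc ∑ v ∈ c, κ v * (μ ^ (lam v + 1 / κ v) - μ ^ lam v)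
      ≤ ∑ v ∈ c, μ ^ lam v * logb 2 μ :=
        sum_le_sum fun v hv => mul_rpow_add_inv_sub_rpow_le (by linarith) (hκpos v hv) (hκ v hv)
    _ = (∑ v ∈ c, μ ^ lam v) * logb 2 μ := (sum_mul ..).symm
    _ ≤ 2 * ℓ * logb 2 μ := by gcongr

theorem stmt_4 {V : Type*} [DecidableEq V] (ℓ : ℕ) (hℓ : 1 ≤ ℓ) (μ : ℝ)
    (hμ : μ = 2 * ℓ + 2) (c : Finset V) (hc : c.card = ℓ)
    (κ lam : V → ℝ)
    (hκ : ∀ v ∈ c, Real.logb 2 μ ≤ κ v)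
    (hlam : ∀ v ∈ c, 0 ≤ lam v)
    (hadmit : ∑ v ∈ c, (κ v * (μ ^ lam v - 1)) / κ v ≤ (ℓ : ℝ)) :
    ∑ v ∈ c, κ v * (μ ^ (lam v + 1 / κ v) - μ ^ lam v) ≤
      2 * ℓ * Real.logb 2 μ :=
  stmt_4_general ℓ μ hμ c hc κ lam hκ hadmit
end

section
/- Let ℓ be a power of 2 with ℓ ≥ 2 and κ > 0, and let nonnegative reals x_0,…,x_{log₂ ℓ} satisfy Σ_{i=0}^{log₂ ℓ} (ℓ/2^i)·x_i ≤ ℓκ. Then there exists j with 0 ≤ j ≤ log₂ ℓ such that Σ_{i=0}^{j} x_i ≤ 2·2^j·κ / log₂ ℓ. -/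
theorem stmt_8 (L : ℕ) (hL : 1 ≤ L) (κ : ℝ) (hκ : 0 < κ)
    (x : ℕ → ℝ) (hx : ∀ i, 0 ≤ x i)
    (hcap : ∑ i ∈ Finset.range (L + 1), ((2 : ℝ) ^ L / 2 ^ i) * x i ≤ (2 : ℝ) ^ L * κ) :
    ∃ j ≤ L, ∑ i ∈ Finset.range (j + 1), x i ≤ 2 * 2 ^ j * κ / L := by
  by_contra hcon
  push_neg at hcon
  have hLR : (0:ℝ) < L := by exact_mod_cast hL
  have hswap : ∑ j ∈ Finset.range (L + 1), ((2:ℝ)^L / 2^j) * ∑ i ∈ Finset.range (j+1), x i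
      = ∑ i ∈ Finset.range (L + 1), ∑ j ∈ Finset.Ico i (L+1), ((2:ℝ)^L / 2^j) * x i := by
    have h := Finset.sum_Ico_Ico_comm 0 (L+1) (fun i j => ((2:ℝ)^L / 2^j) * x i)
    simp only [← Finset.range_eq_Ico] at h
    simp only [Finset.mul_sum]
    exact h.symm
  have hgeom : ∀ i ∈ Finset.range (L + 1),
      ∑ j ∈ Finset.Ico i (L+1), ((2:ℝ)^L / 2^j) * x i ≤ 2 * (((2:ℝ)^L / 2^i) * x i) := by
    intro i hi
    have hxi := hx i
    have hc : ∑ j ∈ Finset.Ico i (L+1), ((2:ℝ)^L / 2^j) ≤ 2 * ((2:ℝ)^L / 2^i) := by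
      have h1 : ∑ j ∈ Finset.Ico i (L+1), ((1:ℝ)/2)^j ≤ 2 * ((1:ℝ)/2)^i := by
        rw [Finset.sum_Ico_eq_sum_range]
        have h2 : ∑ j ∈ Finset.range (L + 1 - i), ((1:ℝ)/2)^(i + j)
            = ((1:ℝ)/2)^i * ∑ j ∈ Finset.range (L + 1 - i), ((1:ℝ)/2)^j := by
          rw [Finset.mul_sum]; exact Finset.sum_congr rfl (fun j _ => pow_add _ _ _)
        rw [h2]
        have hsum : ∑ j ∈ Finset.range (L + 1 - i), ((1:ℝ)/2)^j ≤ 2 := by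
          rw [geom_sum_eq (show ((1:ℝ)/2) ≠ 1 by norm_num) (L + 1 - i)]
          have h0 : (0:ℝ) ≤ ((1:ℝ)/2)^(L+1-i) := by positivity
          have e : (((1:ℝ)/2)^(L+1-i) - 1)/((1:ℝ)/2 - 1) = 2 - 2*((1:ℝ)/2)^(L+1-i) := by
            rw [show ((1:ℝ)/2 - 1) = -(1/2) by norm_num]
            field_simp
            ring
          rw [e]; linarith
        nlinarith [pow_pos (show (0:ℝ) < 1/2 by norm_num) i]
      calc ∑ j ∈ Finset.Ico i (L+1), ((2:ℝ)^L / 2^j)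
          = (2:ℝ)^L * ∑ j ∈ Finset.Ico i (L+1), ((1:ℝ)/2)^j := by
            rw [Finset.mul_sum]; refine Finset.sum_congr rfl (fun j _ => ?_)
            rw [div_pow, one_pow]; ring
        _ ≤ (2:ℝ)^L * (2 * ((1:ℝ)/2)^i) := by
            have : (0:ℝ) < (2:ℝ)^L := by positivity
            nlinarith
        _ = 2 * ((2:ℝ)^L / 2^i) := by rw [div_pow, one_pow]; ring
    calc ∑ j ∈ Finset.Ico i (L+1), ((2:ℝ)^L / 2^j) * x i
        = (∑ j ∈ Finset.Ico i (L+1), ((2:ℝ)^L / 2^j)) * x i := by rw [Finset.sum_mul]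
      _ ≤ (2 * ((2:ℝ)^L / 2^i)) * x i := by nlinarith
      _ = 2 * (((2:ℝ)^L / 2^i) * x i) := by ring
  have htotal : ∑ j ∈ Finset.range (L + 1), ((2:ℝ)^L / 2^j) * ∑ i ∈ Finset.range (j+1), x i
      ≤ 2 * ((2:ℝ)^L * κ) := by
    rw [hswap]
    calc _ ≤ ∑ i ∈ Finset.range (L + 1), 2 * (((2:ℝ)^L / 2^i) * x i) :=
          Finset.sum_le_sum hgeom
      _ = 2 * ∑ i ∈ Finset.range (L + 1), ((2:ℝ)^L / 2^i) * x i := by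
          rw [Finset.mul_sum]
      _ ≤ 2 * ((2:ℝ)^L * κ) := by linarith
  have hlow : ∀ j ∈ Finset.range (L + 1),
      2 * (2:ℝ)^L * κ / L < ((2:ℝ)^L / 2^j) * ∑ i ∈ Finset.range (j+1), x i := by
    intro j hj
    have hjL : j ≤ L := by simp at hj; omega
    have hj' := hcon j hjL
    have h2j : (0:ℝ) < (2:ℝ)^j := by positivity
    have h2L : (0:ℝ) < (2:ℝ)^L := by positivity
    have key : ((2:ℝ)^L / 2^j) * (2 * 2^j * κ / L) = 2 * (2:ℝ)^L * κ / L := by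
      field_simp
    calc 2 * (2:ℝ)^L * κ / L = ((2:ℝ)^L / 2^j) * (2 * 2^j * κ / L) := key.symm
      _ < ((2:ℝ)^L / 2^j) * ∑ i ∈ Finset.range (j+1), x i :=
          mul_lt_mul_of_pos_left hj' (by positivity)
  have hsumlow : (L + 1 : ℝ) * (2 * (2:ℝ)^L * κ / L)
      < ∑ j ∈ Finset.range (L + 1), ((2:ℝ)^L / 2^j) * ∑ i ∈ Finset.range (j+1), x i := by
    have := Finset.sum_lt_sum_of_nonempty (Finset.nonempty_range_add_one) hlow
    simpa [Finset.sum_const, Finset.card_range, nsmul_eq_mul] using this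
  have h2L : (0:ℝ) < (2:ℝ)^L := by positivity
  have hfin : (L + 1 : ℝ) * (2 * (2:ℝ)^L * κ / L) < 2 * ((2:ℝ)^L * κ) :=
    lt_of_lt_of_le hsumlow htotal
  have hLne : (L:ℝ) ≠ 0 := ne_of_gt hLR
  rw [div_eq_mul_inv] at hfin
  have hinv : (1:ℝ) ≤ (L:ℝ) * (L:ℝ)⁻¹ := by rw [mul_inv_cancel₀ hLne]
  nlinarith [mul_pos h2L hκ, mul_pos (mul_pos (by norm_num : (0:ℝ)<2) h2L) hκ,
    inv_pos.mpr hLR]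
end

section
/- Let ℓ be a power of 2 with ℓ ≥ 2, κ > 0, and suppose nonnegative reals x_0,…,x_{log₂ ℓ} satisfy Σ_{i=0}^{log₂ ℓ} (ℓ/2^i)·x_i ≤ ℓκ. Then there exists j, 0 ≤ j ≤ log₂ ℓ, such that (2^j·κ) / (Σ_{i=0}^{j} x_i) ≥ (log₂ ℓ)/2 (interpreting the ratio as +∞ if the denominator is 0). -/
/-!
Let `S j = x 0 + ⋯ + x j`. Summation by parts rewrites the normalised capacity
`∑ i ≤ L, x i / 2 ^ i` as `S L / 2 ^ L + ∑ j < L, S j / 2 ^ (j + 1)`. If every ratio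
`2 ^ j κ / S j` were below `L / 2`, then each of the `L` terms `S j / 2 ^ (j + 1)` would exceed
`κ / L` and the term `S L / 2 ^ L` would exceed `2 κ / L`, so `L` times the capacity would exceed
`(L + 2) κ`. Since the capacity lies between `0` and `κ`, this is impossible.
-/

open Finset

theorem sum_range_pow_mul_eq_by_parts {R : Type*} [CommRing R] (r : R) (x : ℕ → R) (n : ℕ) :
    ∑ i ∈ range (n + 1), r ^ i * x i =
      r ^ n * ∑ i ∈ range (n + 1), x i +
        ∑ j ∈ range n, (1 - r) * (r ^ j * ∑ i ∈ range (j + 1), x i) := by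
  induction n with
  | zero => simp
  | succ n ih =>
    rw [sum_range_succ (fun i => r ^ i * x i), ih,
      sum_range_succ (fun j => (1 - r) * (r ^ j * ∑ i ∈ range (j + 1), x i)) n,
      sum_range_succ x (n + 1)]
    ring

theorem sum_pow_div_pow_mul_eq {K : Type*} [Field K] (a : K) (L : ℕ) (s : Finset ℕ)
    (x : ℕ → K) : ∑ i ∈ s, (a ^ L / a ^ i) * x i = a ^ L * ∑ i ∈ s, a⁻¹ ^ i * x i := by
  rw [mul_sum]
  refine sum_congr rfl fun i _ => ?_
  rw [inv_pow, div_eq_mul_inv, mul_assoc]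

theorem two_mul_lt_of_div_lt_half {κ s l : ℝ} (j : ℕ) (hs : 0 < s)
    (h : 2 ^ j * κ / s < l / 2) : 2 * κ < l * (2⁻¹ ^ j * s) := by
  rw [div_lt_div_iff₀ hs two_pos] at h
  calc 2 * κ = 2⁻¹ ^ j * (2 ^ j * κ * 2) := by rw [inv_pow]; field_simp
    _ < 2⁻¹ ^ j * (l * s) := mul_lt_mul_of_pos_left h (by positivity)
    _ = l * (2⁻¹ ^ j * s) := by ring

theorem add_two_mul_lt_of_forall_two_mul_lt (L : ℕ) (κ : ℝ) (S : ℕ → ℝ)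
    (hS : ∀ j ≤ L, 2 * κ < L * (2⁻¹ ^ j * S j)) :
    (L + 2) * κ < L * (2⁻¹ ^ L * S L + ∑ j ∈ range L, (1 - 2⁻¹) * (2⁻¹ ^ j * S j)) := by
  have hterm : ∀ j ∈ range L, κ ≤ L * ((1 - 2⁻¹) * (2⁻¹ ^ j * S j)) := fun j hj => by
    linarith [hS j (mem_range.mp hj).le]
  have hsum := card_nsmul_le_sum _ _ _ hterm
  rw [card_range, nsmul_eq_mul] at hsum
  rw [mul_add, mul_sum]
  linarith [hS L le_rfl]

theorem stmt_9_general (L : ℕ) (κ : ℝ)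
    (x : ℕ → ℝ) (hx : ∀ i, 0 ≤ x i)
    (hcap : ∑ i ∈ Finset.range (L + 1), ((2 : ℝ) ^ L / 2 ^ i) * x i ≤ (2 : ℝ) ^ L * κ) :
    ∃ j ≤ L, (∑ i ∈ Finset.range (j + 1), x i = 0) ∨
      (L : ℝ) / 2 ≤ ((2 : ℝ) ^ j * κ) / ∑ i ∈ Finset.range (j + 1), x i := by
  by_contra! h
  set S : ℕ → ℝ := fun j => ∑ i ∈ range (j + 1), x i
  set W := ∑ i ∈ range (L + 1), (2⁻¹ : ℝ) ^ i * x i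
  have hS : ∀ j ≤ L, 2 * κ < L * (2⁻¹ ^ j * S j) := fun j hj =>
    two_mul_lt_of_div_lt_half j ((sum_nonneg fun i _ => hx i).lt_of_ne' (h j hj).1) (h j hj).2
  have hW_nonneg : 0 ≤ W := sum_nonneg fun i _ => mul_nonneg (by positivity) (hx i)
  have hW_le : W ≤ κ :=
    le_of_mul_le_mul_left (by rwa [sum_pow_div_pow_mul_eq] at hcap) (by positivity)
  have hLW : (L + 2) * κ < L * W := by
    rw [show W = _ from sum_range_pow_mul_eq_by_parts _ _ _]
    exact add_two_mul_lt_of_forall_two_mul_lt L κ S hS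
  linarith [mul_le_mul_of_nonneg_left hW_le (Nat.cast_nonneg (α := ℝ) L)]

theorem stmt_9 (L : ℕ) (hL : 1 ≤ L) (κ : ℝ) (hκ : 0 < κ)
    (x : ℕ → ℝ) (hx : ∀ i, 0 ≤ x i)
    (hcap : ∑ i ∈ Finset.range (L + 1), ((2 : ℝ) ^ L / 2 ^ i) * x i ≤ (2 : ℝ) ^ L * κ) :
    ∃ j ≤ L, (∑ i ∈ Finset.range (j + 1), x i = 0) ∨
      (L : ℝ) / 2 ≤ ((2 : ℝ) ^ j * κ) / ∑ i ∈ Finset.range (j + 1), x i :=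
  stmt_9_general L κ x hx hcap
end

section
/- Let U be a finite set (universe), and let C be a finite collection of subsets of U, each of size exactly k. Construct, for each S ∈ C, a 'chain' c_S = S, and consider selections C' ⊆ C of pairwise disjoint chains. Then the maximum number of requests that can be admitted, where each of at least |C| identical requests may be assigned to any chain and each element of U has capacity 1 (each element may belong to at most one used chain), equals the maximum cardinality of a collection of pairwise disjoint sets in C. -/
/-!
The two sets of admissible sizes coincide. Chains are nonempty (k ≥ 1), so requests
assigned to pairwise disjoint chains use distinct chains, and the image of an admission
is a packing of the same size. Conversely, since |C| ≤ |R|, any packing can be put in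
bijection with an equally large set of requests.
-/

open Finset

theorem Set.PairwiseDisjoint.injOn_of_ne_bot {ι α : Type*} [PartialOrder α] [OrderBot α]
    {s : Set ι} {f : ι → α} (hs : s.PairwiseDisjoint f) (hf : ∀ i ∈ s, f i ≠ ⊥) :
    s.InjOn f := by
  intro i hi j hj hij
  by_contra hne
  have hdisj := hs hi hj hne
  rw [Function.onFun, hij, disjoint_self] at hdisj
  exact hf j hj hdisj

theorem Finset.exists_subset_bijOn_of_card_le {ι α : Type*} [Nonempty α]
    {s : Finset α} {R : Finset ι} (h : #s ≤ #R) :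
    ∃ A ⊆ R, #A = #s ∧ ∃ f : ι → α, Set.BijOn f A s := by
  obtain ⟨A, hAR, hA⟩ := exists_subset_card_eq h
  obtain ⟨f, hf⟩ := A.finite_toSet.exists_bijOn_of_encard_eq (t := (s : Set α))
    (by simp only [Set.encard_coe_eq_coe_finsetCard, hA])
  exact ⟨A, hAR, hA, f, hf⟩

theorem stmt_10_general {U ι : Type*} [DecidableEq U] (k : ℕ) (hk : 3 ≤ k)
    (C : Finset (Finset U)) (hC : ∀ S ∈ C, S.card = k)
    (R : Finset ι) (hR : C.card ≤ R.card) :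
    sSup {n : ℕ | ∃ (A : Finset ι) (f : ι → Finset U),
        A ⊆ R ∧ A.card = n ∧ (∀ j ∈ A, f j ∈ C) ∧
        ∀ i ∈ A, ∀ j ∈ A, i ≠ j → Disjoint (f i) (f j)}
      = sSup {n : ℕ | ∃ C' ⊆ C, C'.card = n ∧
          (C' : Set (Finset U)).Pairwise Disjoint} := by
  congr 1
  ext n
  constructor
  · rintro ⟨A, f, hAR, rfl, hfC, hdisj⟩
    have hinj : Set.InjOn f A := Set.PairwiseDisjoint.injOn_of_ne_bot hdisj fun i hi =>
      (card_pos.mp (by rw [hC _ (hfC i hi)]; omega)).ne_empty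
    refine ⟨A.image f, fun S hS => ?_, card_image_of_injOn hinj, ?_⟩
    · obtain ⟨i, hi, rfl⟩ := mem_image.mp hS
      exact hfC i hi
    · rw [coe_image]
      exact (hinj.pairwiseDisjoint_image (f := id)).mpr hdisj
  · rintro ⟨C', hC'C, rfl, hpair⟩
    obtain ⟨A, hAR, hA, f, hf⟩ := exists_subset_bijOn_of_card_le ((card_le_card hC'C).trans hR)
    exact ⟨A, f, hAR, hA, fun j hj => hC'C (hf.mapsTo hj),
      (hf.injOn.pairwiseDisjoint_image (f := id)).mp (hf.image_eq ▸ hpair)⟩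

theorem stmt_10 {U ι : Type*} [DecidableEq U] [Fintype ι] (k : ℕ) (hk : 3 ≤ k)
    (C : Finset (Finset U)) (hC : ∀ S ∈ C, S.card = k)
    (R : Finset ι) (hR : C.card ≤ R.card) :
    sSup {n : ℕ | ∃ (A : Finset ι) (f : ι → Finset U),
        A ⊆ R ∧ A.card = n ∧ (∀ j ∈ A, f j ∈ C) ∧
        ∀ i ∈ A, ∀ j ∈ A, i ≠ j → Disjoint (f i) (f j)}
      = sSup {n : ℕ | ∃ C' ⊆ C, C'.card = n ∧
          (C' : Set (Finset U)).Pairwise Disjoint} :=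
  stmt_10_general k hk C hC R hR
end

section
/- Let G = (V, E) be a finite simple graph with maximum degree at most ℓ, and construct chains c_v as follows: c_v contains the edges incident to v plus ℓ - deg(v) fresh auxiliary elements unique to v. Then the maximum size of a family W ⊆ V such that the chains {c_v : v ∈ W} are pairwise disjoint equals the maximum size of an independent set in G. -/
/-! Auxiliary elements are tagged by their owner, so two chains of distinct vertices can only
share an edge, and the only edge incident to both `u` and `v` is `s(u, v)`. Hence the chains of
`W` are pairwise disjoint exactly when `W` is independent, and the two suprema range over the
same sets. -/

open Finset

namespace SimpleGraph

variable {V α : Type*} [Fintype V] [DecidableEq V] [DecidableEq α]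
  (G : SimpleGraph V) [DecidableRel G.Adj]

theorem disjoint_incidenceFinset_iff {u v : V} (huv : u ≠ v) :
    Disjoint (G.incidenceFinset u) (G.incidenceFinset v) ↔ ¬G.Adj u v := by
  rw [← Finset.disjoint_coe, coe_incidenceFinset, coe_incidenceFinset,
    Set.disjoint_iff_inter_eq_empty]
  refine ⟨fun h hadj => ?_, fun h => G.incidenceSet_inter_incidenceSet_of_not_adj h huv⟩
  simp [G.incidenceSet_inter_incidenceSet_of_adj hadj] at h

def chain (A : V → Finset α) (v : V) : Finset (Sym2 V ⊕ V × α) :=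
  (G.incidenceFinset v).image Sum.inl ∪ (A v).image (fun i => Sum.inr (v, i))

theorem disjoint_chain_iff (A : V → Finset α) {u v : V} (huv : u ≠ v) :
    Disjoint (G.chain A u) (G.chain A v) ↔ ¬G.Adj u v := by
  have hinl_inr (s : Finset (Sym2 V)) (w : V) (t : Finset α) :
      Disjoint (s.image Sum.inl) (t.image fun i => (Sum.inr (w, i) : Sym2 V ⊕ V × α)) :=
    Finset.disjoint_left.2 (by simp)
  have haux : Disjoint ((A u).image fun i => (Sum.inr (u, i) : Sym2 V ⊕ V × α))
      ((A v).image fun i => Sum.inr (v, i)) :=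
    Finset.disjoint_left.2 (by simp [huv.symm])
  simp only [chain, disjoint_union_left, disjoint_union_right,
    disjoint_image Sum.inl_injective, G.disjoint_incidenceFinset_iff huv, hinl_inr, haux,
    (hinl_inr _ _ _).symm, and_true]

end SimpleGraph

theorem stmt_12_general {V : Type*} [Fintype V] [DecidableEq V]
    (G : SimpleGraph V) [DecidableRel G.Adj] (ℓ : ℕ)
    (c : V → Finset (Sym2 V ⊕ V × ℕ))
    (hc : ∀ v, c v = (G.incidenceFinset v).image Sum.inl ∪
        (Finset.range (ℓ - G.degree v)).image (fun i => Sum.inr (v, i))) :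
    sSup {n : ℕ | ∃ W : Finset V, W.card = n ∧
        ∀ u ∈ W, ∀ v ∈ W, u ≠ v → Disjoint (c u) (c v)}
      = sSup {n : ℕ | ∃ W : Finset V, W.card = n ∧
          ∀ u ∈ W, ∀ v ∈ W, ¬ G.Adj u v} := by
  obtain rfl : c = G.chain (fun v => range (ℓ - G.degree v)) := funext hc
  congr 1
  ext n
  refine exists_congr fun W => and_congr_right fun _ =>
    forall₂_congr fun u _ => forall₂_congr fun v _ => ?_
  exact ⟨fun h hadj => (G.disjoint_chain_iff _ hadj.ne).1 (h hadj.ne) hadj,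
    fun h huv => (G.disjoint_chain_iff _ huv).2 h⟩

theorem stmt_12 {V : Type*} [Fintype V] [DecidableEq V]
    (G : SimpleGraph V) [DecidableRel G.Adj] (ℓ : ℕ)
    (hdeg : ∀ v, G.degree v ≤ ℓ)
    (c : V → Finset (Sym2 V ⊕ V × ℕ))
    (hc : ∀ v, c v = (G.incidenceFinset v).image Sum.inl ∪
        (Finset.range (ℓ - G.degree v)).image (fun i => Sum.inr (v, i))) :
    sSup {n : ℕ | ∃ W : Finset V, W.card = n ∧
        ∀ u ∈ W, ∀ v ∈ W, u ≠ v → Disjoint (c u) (c v)}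
      = sSup {n : ℕ | ∃ W : Finset V, W.card = n ∧
          ∀ u ∈ W, ∀ v ∈ W, ¬ G.Adj u v} :=
  stmt_12_general G ℓ c hc
end

section
/- Let V be a finite set with capacities κ: V → ℕ₊, let μ ≥ 2 be real with κ(v) ≥ log₂ μ for all v, and let requests be processed online such that request j is admitted and assigned to a chain c_j ⊆ V only if Σ_{v∈c_j} (μ^{λ_v(j)} - 1) ≤ ℓ, where λ_v(j) = |{i < j admitted : v ∈ c_i}|/κ(v) and μ = 2ℓ+2. Then at every time j and every node v, λ_v(j) ≤ 1, i.e., |{admitted i : v ∈ c_i}| ≤ κ(v). -/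
/-!
A node of full load `λ ≥ 1` alone costs `μ ^ λ - 1 ≥ μ - 1 = 2ℓ + 1 > ℓ`, so every admitted request
only uses nodes of load `< 1`, i.e. nodes used by fewer than `κ v` earlier admitted requests. The
number of admitted requests through `v` therefore only grows while it is below `κ v`, and never
exceeds it.
-/

open Finset

theorem card_filter_range_le_of_forall_lt {p : ℕ → Prop} [DecidablePred p] {k : ℕ}
    (h : ∀ j, p j → #{i ∈ range j | p i} < k) (j : ℕ) : #{i ∈ range j | p i} ≤ k := by
  induction j with
  | zero => simp
  | succ j ih =>
    rw [range_add_one, filter_insert]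
    split_ifs with hj
    · rw [card_insert_of_notMem (by simp)]
      exact h j hj
    · exact ih

theorem lt_one_of_sum_rpow_sub_one_le {ι : Type*} {s : Finset ι} {x : ι → ℝ} {μ ℓ : ℝ}
    (hμ : 1 < μ) (hx : ∀ i ∈ s, 0 ≤ x i) (hℓ : ℓ < μ - 1)
    (hsum : ∑ i ∈ s, (μ ^ x i - 1) ≤ ℓ) {i : ι} (hi : i ∈ s) : x i < 1 := by
  have hterm : μ ^ x i - 1 ≤ ℓ :=
    (single_le_sum (fun k hk => sub_nonneg.2 (Real.one_le_rpow hμ.le (hx k hk))) hi).trans hsum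
  rw [← Real.rpow_lt_rpow_left_iff hμ, Real.rpow_one]
  linarith

theorem stmt_13_general {V : Type*} [DecidableEq V]
    (κ : V → ℕ) (hκpos : ∀ v, 0 < κ v)
    (ℓ μ : ℝ) (hμ2 : 2 ≤ μ) (hμ : μ = 2 * ℓ + 2)
    (admitted : ℕ → Prop) [DecidablePred admitted]
    (c : ℕ → Finset V)
    (load : ℕ → V → ℝ)
    (hload : ∀ j v, load j v =
      ((Finset.range j).filter (fun i => admitted i ∧ v ∈ c i)).card / (κ v : ℝ))
    (hadmit : ∀ j, admitted j → ∑ v ∈ c j, (μ ^ load j v - 1) ≤ ℓ) :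
    ∀ j v, load j v ≤ 1 := by
  have hload_nonneg : ∀ j v, 0 ≤ load j v := fun j v => by
    rw [hload]
    positivity
  intro j v
  have hκv : (0 : ℝ) < κ v := by exact_mod_cast hκpos v
  rw [hload, div_le_one hκv]
  have hcount : #{i ∈ range j | admitted i ∧ v ∈ c i} ≤ κ v := by
    refine card_filter_range_le_of_forall_lt (fun i ⟨hi, hv⟩ => ?_) j
    have hlt : load i v < 1 := lt_one_of_sum_rpow_sub_one_le (by linarith)
      (fun w _ => hload_nonneg i w) (by linarith) (hadmit i hi) hv
    rwa [hload, div_lt_one hκv, Nat.cast_lt] at hlt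
  exact_mod_cast hcount

theorem stmt_13 {V : Type*} [DecidableEq V]
    (κ : V → ℕ) (hκpos : ∀ v, 0 < κ v)
    (ℓ μ : ℝ) (hμ2 : 2 ≤ μ) (hμ : μ = 2 * ℓ + 2)
    (hκ : ∀ v, Real.logb 2 μ ≤ (κ v : ℝ))
    (admitted : ℕ → Prop) [DecidablePred admitted]
    (c : ℕ → Finset V)
    (load : ℕ → V → ℝ)
    (hload : ∀ j v, load j v =
      ((Finset.range j).filter (fun i => admitted i ∧ v ∈ c i)).card / (κ v : ℝ))
    (hadmit : ∀ j, admitted j → ∑ v ∈ c j, (μ ^ load j v - 1) ≤ ℓ) :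
    ∀ j v, load j v ≤ 1 :=
  stmt_13_general κ hκpos ℓ μ hμ2 hμ admitted c load hload hadmit
end
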